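/- Let G be a lattice-ordered group and (H,u) a linearly ordered abelian group with strong unit u. Then the pseudo MV-algebra M = Γ(H ×ₗ G, (u,0)) is a strong (H,u)-perfect pseudo MV-algebra: the sets M_0 = {(0,g) : g ∈ G, g ≥ 0}, M_u = {(u,g) : g ∈ G, g ≤ 0}, and M_t = {(t,g) : g ∈ G} for 0 < t < u form an (H,u)-decomposition of M having the strong cyclic property with strong cyclic family ((h,0) : h ∈ [0,u]_H). -/

import Mathlib

open Set

namespace PseudoMV

/-! ### Basic pseudo MV-algebra notions on the interval `Γ(K,v) = [0,v]`
of a (not necessarily abelian) lattice-ordered group `K`. -/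

section Defs

variable {K : Type*} [Lattice K] [AddGroup K]

/-- `v` is a strong (order) unit of `K`. -/
def IsStrongUnit (v : K) : Prop := 0 ≤ v ∧ ∀ x : K, ∃ n : ℕ, x ≤ n • v

/-- The carrier of the pseudo MV-algebra `Γ(K,v)`. -/
def carrier (v : K) : Set K := Set.Icc 0 v

/-- `x ⊕ y = (x + y) ⊓ v`. -/
def oplus (v x y : K) : K := (x + y) ⊓ v

/-- Left negation `x⁻ = v - x`. -/
def negL (v x : K) : K := v - x

/-- Right negation `x~ = -x + v`. -/
def negR (v x : K) : K := -x + v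

/-- `x ⊙ y = (x - v + y) ⊔ 0`. -/
def odot (v x y : K) : K := (x - v + y) ⊔ 0

/-- The partial sum `x + y` is defined in `Γ(K,v)`, i.e. the group sum lies in `[0,v]`. -/
def sumDef (v x y : K) : Prop := 0 ≤ x + y ∧ x + y ≤ v

/-- `n`-fold sum `n.x = x ⊕ ⋯ ⊕ x`. -/
def nOplus (v : K) : ℕ → K → K
  | 0, _ => 0
  | n + 1, x => oplus v (nOplus v n x) x

/-- `ord(x) < ∞`, i.e. some `n ≥ 1` satisfies `n.x = 1`. -/
def OrdFinite (v x : K) : Prop := ∃ n : ℕ, 1 ≤ n ∧ nOplus v n x = v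

/-- The set of infinitesimal elements: all `n`-fold partial sums `nx` are defined. -/
def Infinit (v : K) : Set K := {x | x ∈ carrier v ∧ ∀ n : ℕ, n • x ≤ v}

/-- An ideal of `Γ(K,v)`. -/
structure IsIdeal (v : K) (I : Set K) : Prop where
  subset : I ⊆ carrier v
  nonempty : I.Nonempty
  lower : ∀ a ∈ carrier v, ∀ b ∈ I, a ≤ b → a ∈ I
  oplus_mem : ∀ a ∈ I, ∀ b ∈ I, oplus v a b ∈ I

/-- A normal ideal: `x ⊕ I = I ⊕ x` for every `x`. -/
def IsNormalIdeal (v : K) (I : Set K) : Prop :=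
  IsIdeal v I ∧ ∀ x ∈ carrier v, (fun a => oplus v x a) '' I = (fun a => oplus v a x) '' I

/-- A maximal ideal: proper and not properly contained in a proper ideal. -/
def IsMaximalIdeal (v : K) (I : Set K) : Prop :=
  IsIdeal v I ∧ I ≠ carrier v ∧ ∀ J, IsIdeal v J → I ⊆ J → J ≠ carrier v → J = I

/-- A prime ideal. -/
def IsPrimeIdeal (v : K) (I : Set K) : Prop :=
  IsIdeal v I ∧ ∀ x ∈ carrier v, ∀ y ∈ carrier v, x ⊓ y ∈ I → x ∈ I ∨ y ∈ I

/-- The radical: intersection of all maximal ideals. -/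
def Rad (v : K) : Set K := ⋂₀ {I | IsMaximalIdeal v I}

/-- The normal radical: intersection of all maximal ideals that are normal. -/
def RadN (v : K) : Set K := ⋂₀ {I | IsMaximalIdeal v I ∧ IsNormalIdeal v I}

/-- Membership in the class `𝓜`: every maximal ideal is normal. -/
def MemClassM (v : K) : Prop := ∀ I, IsMaximalIdeal v I → IsNormalIdeal v I

/-- A symmetric pseudo MV-algebra: the two negations coincide. -/
def IsSymmetric (v : K) : Prop := ∀ x ∈ carrier v, negL v x = negR v x

/-- A local pseudo MV-algebra: a unique maximal ideal, which is moreover normal. -/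
def IsLocal (v : K) : Prop :=
  ∃ I, IsMaximalIdeal v I ∧ IsNormalIdeal v I ∧ ∀ J, IsMaximalIdeal v J → J = I

/-- A state on `Γ(K,v)`. -/
structure IsState (v : K) (s : K → ℝ) : Prop where
  maps_to : ∀ x ∈ carrier v, s x ∈ Set.Icc (0 : ℝ) 1
  map_unit : s v = 1
  additive : ∀ x ∈ carrier v, ∀ y ∈ carrier v, sumDef v x y → s (x + y) = s x + s y

/-- The kernel of a state. -/
def stateKer (v : K) (s : K → ℝ) : Set K := {x | x ∈ carrier v ∧ s x = 0}

/-- `x/I = y/I` in the quotient by the (normal) ideal `I`. -/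
def quotEq (v : K) (I : Set K) (x y : K) : Prop :=
  oplus v (odot v x (negL v y)) (odot v y (negL v x)) ∈ I

/-- `x/I ≤ y/I` in the quotient by the (normal) ideal `I`. -/
def quotLE (v : K) (I : Set K) (x y : K) : Prop := odot v x (negL v y) ∈ I

/-- A commutative ideal: a normal ideal with commutative quotient. -/
def IsCommutativeIdeal (v : K) (I : Set K) : Prop :=
  IsNormalIdeal v I ∧ ∀ x ∈ carrier v, ∀ y ∈ carrier v, quotEq v I (oplus v x y) (oplus v y x)

/-- A strict ideal: `x/I < y/I` implies `x < y`. -/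
def IsStrictIdeal (v : K) (I : Set K) : Prop :=
  ∀ x ∈ carrier v, ∀ y ∈ carrier v, quotLE v I x y → ¬ quotLE v I y x → x < y

/-- A retractive (normal) ideal: the canonical projection `π_I : M → M/I` admits a
homomorphic section `δ_I` with `π_I ∘ δ_I = id`.  We encode `δ_I` by the map
`d = δ_I ∘ π_I : M → M`, which must be constant on classes, a homomorphism with respect
to the quotient operations, and a section of `π_I`. -/
def IsRetractive (v : K) (I : Set K) : Prop :=
  ∃ d : K → K,
    (∀ x ∈ carrier v, d x ∈ carrier v) ∧
    (∀ x ∈ carrier v, ∀ y ∈ carrier v, quotEq v I x y → d x = d y) ∧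
    (∀ x ∈ carrier v, ∀ y ∈ carrier v, d (oplus v x y) = oplus v (d x) (d y)) ∧
    (∀ x ∈ carrier v, d (negL v x) = negL v (d x)) ∧
    (∀ x ∈ carrier v, d (negR v x) = negR v (d x)) ∧
    d 0 = 0 ∧ d v = v ∧
    (∀ x ∈ carrier v, quotEq v I (d x) x)

/-- A lexicographic ideal: a nontrivial proper commutative ideal that is strict,
retractive and prime. -/
def IsLexIdeal (v : K) (I : Set K) : Prop :=
  IsCommutativeIdeal v I ∧ I ≠ {0} ∧ I ≠ carrier v ∧
    IsStrictIdeal v I ∧ IsRetractive v I ∧ IsPrimeIdeal v I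

/-- A subalgebra of `Γ(K,v)`. -/
def IsSubalgebra (v : K) (S : Set K) : Prop :=
  S ⊆ carrier v ∧ 0 ∈ S ∧ v ∈ S ∧
    (∀ x ∈ S, ∀ y ∈ S, oplus v x y ∈ S) ∧
    (∀ x ∈ S, negL v x ∈ S) ∧ (∀ x ∈ S, negR v x ∈ S)

/-- The subalgebra generated by a subset. -/
def genSubalg (v : K) (A : Set K) : Set K := ⋂₀ {S | IsSubalgebra v S ∧ A ⊆ S}

end Defs

/-! ### `(H,u)`-decompositions -/

section Decomp

variable {H : Type*} [AddCommGroup H] [LinearOrder H] [IsOrderedAddMonoid H]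
variable {K : Type*} [Lattice K] [AddGroup K]

/-- An `(H,u)`-decomposition of the pseudo MV-algebra `Γ(K,v)`. -/
structure IsDecomposition (u : H) (v : K) (Md : H → Set K) : Prop where
  nonempty : ∀ t ∈ Set.Icc (0 : H) u, (Md t).Nonempty
  subset : ∀ t ∈ Set.Icc (0 : H) u, Md t ⊆ carrier v
  disjoint : ∀ s ∈ Set.Icc (0 : H) u, ∀ t ∈ Set.Icc (0 : H) u, s ≠ t → Md s ∩ Md t = ∅
  cover : ∀ x ∈ carrier v, ∃ t ∈ Set.Icc (0 : H) u, x ∈ Md t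
  mono : ∀ s ∈ Set.Icc (0 : H) u, ∀ t ∈ Set.Icc (0 : H) u, s < t →
    ∀ a ∈ Md s, ∀ b ∈ Md t, a ≤ b
  negL_eq : ∀ t ∈ Set.Icc (0 : H) u, negL v '' Md t = Md (u - t)
  negR_eq : ∀ t ∈ Set.Icc (0 : H) u, negR v '' Md t = Md (u - t)
  oplus_mem : ∀ s ∈ Set.Icc (0 : H) u, ∀ t ∈ Set.Icc (0 : H) u, ∀ x ∈ Md s, ∀ y ∈ Md t,
    oplus v x y ∈ Md (min (s + t) u)

/-- A strong cyclic family for an `(H,u)`-decomposition. -/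
def StrongCyclicFamily (u : H) (v : K) (Md : H → Set K) (c : H → K) : Prop :=
  (∀ t ∈ Set.Icc (0 : H) u, c t ∈ Md t ∧ ∀ x : K, c t + x = x + c t) ∧
  (∀ s ∈ Set.Icc (0 : H) u, ∀ t ∈ Set.Icc (0 : H) u, s + t ≤ u → c s + c t = c (s + t)) ∧
  c u = v

/-- A strong `(H,u)`-perfect pseudo MV-algebra. -/
def IsStrongPerfect (u : H) (v : K) : Prop :=
  ∃ Md c, IsDecomposition u v Md ∧ StrongCyclicFamily u v Md c

/-- A weak cyclic family for an `(H,u)`-decomposition. -/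
def WeakCyclicFamily (u : H) (v : K) (Md : H → Set K) (c : H → K) : Prop :=
  c 0 = 0 ∧
  (∀ t ∈ Set.Icc (0 : H) u, c t ∈ Md t ∧ ∀ x : K, c t + x = x + c t) ∧
  (∀ s ∈ Set.Icc (0 : H) u, ∀ t ∈ Set.Icc (0 : H) u, s + t ≤ u → c s + c t = c (s + t))

end Decomp

/-! ### Isomorphisms -/

section Iso

variable {K : Type*} [Lattice K] [AddGroup K]
variable {K' : Type*} [Lattice K'] [AddGroup K']

/-- An isomorphism of the pseudo MV-algebras `Γ(K,v)` and `Γ(K',v')` (encoded as a map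
`K → K'` whose restriction to `[0,v]` is a bijection onto `[0,v']` preserving all
pseudo MV-operations). -/
structure IsPMVIso (v : K) (v' : K') (f : K → K') : Prop where
  maps_to : ∀ x ∈ carrier v, f x ∈ carrier v'
  inj : ∀ x ∈ carrier v, ∀ y ∈ carrier v, f x = f y → x = y
  surj : ∀ y ∈ carrier v', ∃ x ∈ carrier v, f x = y
  map_zero : f 0 = 0
  map_unit : f v = v'
  map_oplus : ∀ x ∈ carrier v, ∀ y ∈ carrier v, f (oplus v x y) = oplus v' (f x) (f y)
  map_negL : ∀ x ∈ carrier v, f (negL v x) = negL v' (f x)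
  map_negR : ∀ x ∈ carrier v, f (negR v x) = negR v' (f x)

/-- The pseudo MV-algebras `Γ(K,v)` and `Γ(K',v')` are isomorphic. -/
def PMVIsomorphic (v : K) (v' : K') : Prop := ∃ f, IsPMVIso v v' f

end Iso

/-- An isomorphism of lattice-ordered groups: an order isomorphism that is additive. -/
def LGroupIsomorphic (G : Type*) (G' : Type*) [Lattice G] [AddGroup G] [Lattice G']
    [AddGroup G'] : Prop :=
  ∃ e : G ≃o G', ∀ x y : G, e (x + y) = e x + e y

/-! ### The lexicographic product of a linearly ordered group and a lattice-ordered group -/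

/-- The lexicographic product `H ×ₗ G`. -/
@[ext]
structure LexProd (H : Type*) (G : Type*) where
  fst : H
  snd : G

namespace LexProd

variable {H : Type*} {G : Type*}

section Group

variable [AddGroup H] [AddGroup G]

instance : Add (LexProd H G) := ⟨fun p q => ⟨p.fst + q.fst, p.snd + q.snd⟩⟩
instance : Zero (LexProd H G) := ⟨⟨0, 0⟩⟩
instance : Neg (LexProd H G) := ⟨fun p => ⟨-p.fst, -p.snd⟩⟩

instance : AddGroup (LexProd H G) :=
  AddGroup.ofLeftAxioms (fun a b c => LexProd.ext (add_assoc _ _ _) (add_assoc _ _ _))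
    (fun a => LexProd.ext (zero_add _) (zero_add _))
    (fun a => LexProd.ext (neg_add_cancel _) (neg_add_cancel _))

@[simp] lemma add_fst (p q : LexProd H G) : (p + q).fst = p.fst + q.fst := rfl
@[simp] lemma add_snd (p q : LexProd H G) : (p + q).snd = p.snd + q.snd := rfl
@[simp] lemma zero_fst : (0 : LexProd H G).fst = 0 := rfl
@[simp] lemma zero_snd : (0 : LexProd H G).snd = 0 := rfl

end Group

section Order

variable [LinearOrder H] [Lattice G]

instance : PartialOrder (LexProd H G) where
  le p q := p.fst < q.fst ∨ (p.fst = q.fst ∧ p.snd ≤ q.snd)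
  le_refl p := Or.inr ⟨rfl, le_rfl⟩
  le_trans p q r := by
    rintro (h | ⟨h1, h2⟩) (h' | ⟨h1', h2'⟩)
    · exact Or.inl (h.trans h')
    · exact Or.inl (h1' ▸ h)
    · exact Or.inl (h1 ▸ h')
    · exact Or.inr ⟨h1.trans h1', h2.trans h2'⟩
  le_antisymm p q := by
    rintro (h | ⟨h1, h2⟩) (h' | ⟨h1', h2'⟩)
    · exact absurd (h.trans h') (lt_irrefl _)
    · exact absurd h (h1' ▸ lt_irrefl _)
    · exact absurd h' (h1 ▸ lt_irrefl _)
    · exact LexProd.ext h1 (le_antisymm h2 h2')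

lemma le_def {p q : LexProd H G} :
    p ≤ q ↔ p.fst < q.fst ∨ (p.fst = q.fst ∧ p.snd ≤ q.snd) := Iff.rfl

instance : Lattice (LexProd H G) :=
  { (inferInstance : PartialOrder (LexProd H G)) with
    sup := fun p q =>
      if p.fst < q.fst then q else if q.fst < p.fst then p else ⟨p.fst, p.snd ⊔ q.snd⟩
    inf := fun p q =>
      if p.fst < q.fst then p else if q.fst < p.fst then q else ⟨p.fst, p.snd ⊓ q.snd⟩
    le_sup_left := fun p q => by
      try dsimp only
      split_ifs with h1 h2
      · exact Or.inl h1
      · exact le_rfl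
      · exact Or.inr ⟨rfl, le_sup_left⟩
    le_sup_right := fun p q => by
      try dsimp only
      split_ifs with h1 h2
      · exact le_rfl
      · exact Or.inl h2
      · exact Or.inr ⟨le_antisymm (not_lt.mp h1) (not_lt.mp h2), le_sup_right⟩
    sup_le := fun p q r hp hq => by
      try dsimp only
      split_ifs with h1 h2
      · exact hq
      · exact hp
      · have hfq : p.fst = q.fst := le_antisymm (not_lt.mp h2) (not_lt.mp h1)
        rcases hp with hp | ⟨hp1, hp2⟩
        · exact Or.inl hp
        · rcases hq with hq | ⟨hq1, hq2⟩
          · exact Or.inl (lt_of_eq_of_lt hfq hq)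
          · exact Or.inr ⟨hp1, sup_le hp2 hq2⟩
    inf_le_left := fun p q => by
      try dsimp only
      split_ifs with h1 h2
      · exact le_rfl
      · exact Or.inl h2
      · exact Or.inr ⟨rfl, inf_le_left⟩
    inf_le_right := fun p q => by
      try dsimp only
      split_ifs with h1 h2
      · exact Or.inl h1
      · exact le_rfl
      · exact Or.inr ⟨le_antisymm (not_lt.mp h2) (not_lt.mp h1), inf_le_right⟩
    le_inf := fun p q r hq hr => by
      try dsimp only
      split_ifs with h1 h2
      · exact hq
      · exact hr
      · have hfq : q.fst = r.fst := le_antisymm (not_lt.mp h2) (not_lt.mp h1)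
        rcases hq with hq | ⟨hq1, hq2⟩
        · exact Or.inl hq
        · rcases hr with hr | ⟨hr1, hr2⟩
          · exact Or.inl (lt_of_lt_of_eq hr hfq.symm)
          · exact Or.inr ⟨hq1, le_inf hq2 hr2⟩ }

end Order

section Covariant

variable [AddCommGroup H] [LinearOrder H] [IsOrderedAddMonoid H] [Lattice G] [AddGroup G]
  [CovariantClass G G (· + ·) (· ≤ ·)] [CovariantClass G G (Function.swap (· + ·)) (· ≤ ·)]

instance : CovariantClass (LexProd H G) (LexProd H G) (· + ·) (· ≤ ·) := by
  constructor
  rintro a x y (h | ⟨h1, h2⟩)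
  · exact Or.inl (add_lt_add_right h a.fst)
  · exact Or.inr ⟨by simp [h1], add_le_add_right h2 a.snd⟩

instance : CovariantClass (LexProd H G) (LexProd H G) (Function.swap (· + ·)) (· ≤ ·) := by
  constructor
  rintro a x y (h | ⟨h1, h2⟩)
  · exact Or.inl (add_lt_add_left h a.fst)
  · exact Or.inr ⟨by simp [h1], add_le_add_left h2 a.snd⟩

end Covariant

end LexProd

/-! ### Bundled lattice-ordered groups and linearly ordered unital abelian groups -/

universe u

/-- A bundled (not necessarily abelian) lattice-ordered group. -/
structure LGroupS : Type (u + 1) where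
  carrier : Type u
  [lat : Lattice carrier]
  [grp : AddGroup carrier]
  [cov_left : CovariantClass carrier carrier (· + ·) (· ≤ ·)]
  [cov_right : CovariantClass carrier carrier (Function.swap (· + ·)) (· ≤ ·)]

attribute [instance] LGroupS.lat LGroupS.grp LGroupS.cov_left LGroupS.cov_right

/-- A bundled linearly ordered abelian group with a strong unit. -/
structure LoGroupU : Type (u + 1) where
  carrier : Type u
  [str : AddCommGroup carrier]
  [ord : LinearOrder carrier]
  [isOrd : IsOrderedAddMonoid carrier]
  unit : carrier
  isStrongUnit : IsStrongUnit unit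

attribute [instance] LoGroupU.str LoGroupU.ord LoGroupU.isOrd

/-- A lexicographic pseudo MV-algebra: one isomorphic to `Γ(H ×ₗ G, (u,0))` for some
linearly ordered abelian group `H` with strong unit `u` and some ℓ-group `G`. -/
def IsLexicographicPMV.{u₁, u₂, u₃} {K : Type u₃} [Lattice K] [AddGroup K] (v : K) : Prop :=
  ∃ (Hs : LoGroupU.{u₁}) (Gs : LGroupS.{u₂}),
    PMVIsomorphic v (LexProd.mk Hs.unit (0 : Gs.carrier))

end PseudoMV

/-!
In `H ×ₗ G` with unit `(u, 0)`, the meet `(x + y) ⊓ (u, 0)` is decided by first coordinates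
unless they agree, and then it only truncates the second coordinate at `0`; so the first
coordinate of `x ⊕ y` is `min (x.1 + y.1) u`. Both negations send `(t, g)` to `(u - t, -g)`, and
the elements `(h, 0)` are central because `H` is abelian. The side conditions defining `M_0` and
`M_u` are exactly what `0 ≤ x ≤ (u, 0)` imposes on the second coordinate.
-/

namespace PseudoMV

lemma negR_negL {K : Type*} [AddGroup K] (v x : K) : negR v (negL v x) = x := by
  rw [negR, negL, neg_sub, sub_add_cancel]

namespace LexProd

variable {H G : Type*}

section Order

variable [LinearOrder H] [Lattice G]

lemma le_iff_fst_le {p q : LexProd H G} :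
    p ≤ q ↔ p.fst ≤ q.fst ∧ (p.fst = q.fst → p.snd ≤ q.snd) := by
  rw [le_def]
  constructor
  · rintro (h | ⟨h, hs⟩)
    · exact ⟨h.le, fun he => absurd he h.ne⟩
    · exact ⟨h.le, fun _ => hs⟩
  · rintro ⟨h, hs⟩
    exact h.lt_or_eq.imp_right fun he => ⟨he, hs he⟩

lemma le_of_fst_lt {p q : LexProd H G} (h : p.fst < q.fst) : p ≤ q := Or.inl h

lemma inf_of_fst_eq {p q : LexProd H G} (h : p.fst = q.fst) :
    p ⊓ q = ⟨p.fst, p.snd ⊓ q.snd⟩ := by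
  change ite _ _ _ = _
  simp [h]

end Order

section Group

variable [AddGroup H] [AddGroup G]

@[simp] lemma neg_fst (p : LexProd H G) : (-p).fst = -p.fst := rfl
@[simp] lemma neg_snd (p : LexProd H G) : (-p).snd = -p.snd := rfl
@[simp] lemma sub_fst (p q : LexProd H G) : (p - q).fst = p.fst - q.fst :=
  (sub_eq_add_neg _ _).symm
@[simp] lemma sub_snd (p q : LexProd H G) : (p - q).snd = p.snd - q.snd :=
  (sub_eq_add_neg _ _).symm

lemma negL_mk_zero (u : H) (p : LexProd H G) : negL (mk u 0) p = mk (u - p.fst) (-p.snd) := by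
  ext <;> simp [negL]

end Group

section Oplus

variable [AddGroup H] [LinearOrder H] [AddGroup G] [Lattice G] {u : H} {x y : LexProd H G}

lemma oplus_mk_zero_of_lt (h : (x + y).fst < u) : oplus (mk u 0) x y = x + y :=
  inf_eq_left.2 (le_of_fst_lt h)

lemma oplus_mk_zero_of_eq (h : (x + y).fst = u) :
    oplus (mk u 0) x y = mk u ((x + y).snd ⊓ 0) := by
  rw [oplus, inf_of_fst_eq h, h]

lemma oplus_mk_zero_of_gt (h : u < (x + y).fst) : oplus (mk u 0) x y = mk u 0 :=
  inf_eq_right.2 (le_of_fst_lt h)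

end Oplus

section Comm

variable [AddCommGroup H] [AddGroup G]

lemma negR_mk_zero (u : H) (p : LexProd H G) : negR (mk u 0) p = negL (mk u 0) p := by
  ext <;> simp [negR, negL, neg_add_eq_sub]

lemma mk_zero_add_comm (h : H) (p : LexProd H G) : mk h 0 + p = p + mk h 0 :=
  LexProd.ext (add_comm _ _) (by simp)

end Comm

/-- The class `M_t` of `Γ(H ×ₗ G, (u, 0))`. -/
def slice [Zero H] [Zero G] [Preorder G] (u t : H) : Set (LexProd H G) :=
  {p | p.fst = t ∧ (t = 0 → 0 ≤ p.snd) ∧ (t = u → p.snd ≤ 0)}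

section Slice

variable {u s t : H}

@[simp] lemma mem_slice [Zero H] [Zero G] [Preorder G] {p : LexProd H G} :
    p ∈ slice u t ↔ p.fst = t ∧ (t = 0 → 0 ≤ p.snd) ∧ (t = u → p.snd ≤ 0) := Iff.rfl

lemma mk_mem_slice [Zero H] [Zero G] [Preorder G] (u t : H) :
    (mk t 0 : LexProd H G) ∈ slice u t :=
  ⟨rfl, fun _ => le_rfl, fun _ => le_rfl⟩

lemma mem_carrier_mk_zero_iff [AddGroup H] [LinearOrder H] [AddGroup G] [Lattice G]
    {p : LexProd H G} : p ∈ carrier (mk u 0) ↔ p.fst ∈ Icc 0 u ∧ p ∈ slice u p.fst := by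
  simp only [carrier, mem_Icc, le_iff_fst_le, zero_fst, zero_snd, mem_slice, eq_comm]
  tauto

section Neg

variable [AddCommGroup H] [AddGroup G] [Preorder G] [AddLeftMono G]

lemma negL_mem_slice {p : LexProd H G} (hp : p ∈ slice u t) :
    negL (mk u 0) p ∈ slice u (u - t) := by
  obtain ⟨rfl, hp₀, hpu⟩ := hp
  rw [negL_mk_zero, mem_slice]
  exact ⟨rfl, fun h => neg_nonneg.2 (hpu (sub_eq_zero.1 h).symm),
    fun h => neg_nonpos.2 (hp₀ (sub_eq_self.1 h))⟩

lemma image_negL_slice (u t : H) :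
    negL (mk u 0) '' slice u t = (slice u (u - t) : Set (LexProd H G)) := by
  refine Subset.antisymm (image_subset_iff.2 fun p hp => negL_mem_slice hp) fun q hq => ?_
  refine ⟨negL (mk u 0) q, ?_, by rw [← negR_mk_zero, negR_negL]⟩
  simpa only [sub_sub_cancel] using negL_mem_slice hq

lemma image_negR_slice (u t : H) :
    negR (mk u 0) '' slice u t = (slice u (u - t) : Set (LexProd H G)) := by
  simpa only [negR_mk_zero] using image_negL_slice u t

end Neg

variable [AddCommGroup H] [LinearOrder H] [IsOrderedAddMonoid H] [AddGroup G] [Lattice G]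
  [AddLeftMono G]

lemma oplus_mem_slice {x y : LexProd H G} (hs : 0 ≤ s) (ht : 0 ≤ t) (hx : x ∈ slice u s)
    (hy : y ∈ slice u t) : oplus (mk u 0) x y ∈ slice u (min (s + t) u) := by
  obtain ⟨hxs, hx₀, -⟩ := hx
  obtain ⟨hyt, hy₀, -⟩ := hy
  have hfst : (x + y).fst = s + t := by rw [add_fst, hxs, hyt]
  have hsnd : s + t = 0 → 0 ≤ (x + y).snd := fun h => by
    obtain ⟨rfl, rfl⟩ := (add_eq_zero_iff_of_nonneg hs ht).1 h
    exact add_nonneg (hx₀ rfl) (hy₀ rfl)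
  rcases lt_trichotomy (s + t) u with h | h | h
  · rw [min_eq_left h.le, oplus_mk_zero_of_lt (hfst ▸ h)]
    exact ⟨hfst, hsnd, fun h' => absurd h' h.ne⟩
  · rw [h, min_self, oplus_mk_zero_of_eq (hfst.trans h)]
    exact ⟨rfl, fun hu => le_inf (hsnd (h.trans hu)) le_rfl, fun _ => inf_le_right⟩
  · rw [min_eq_right h.le, oplus_mk_zero_of_gt (hfst ▸ h)]
    exact mk_mem_slice u u

theorem isDecomposition_slice (u : H) :
    IsDecomposition u (mk u 0 : LexProd H G) (slice u) where
  nonempty t _ := ⟨mk t 0, mk_mem_slice u t⟩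
  subset t ht p hp := mem_carrier_mk_zero_iff.2 ⟨hp.1 ▸ ht, hp.1 ▸ hp⟩
  disjoint _ _ _ _ hst := eq_empty_of_forall_notMem fun _ hp => hst (hp.1.1.symm.trans hp.2.1)
  cover p hp := ⟨p.fst, mem_carrier_mk_zero_iff.1 hp⟩
  mono _ _ _ _ hst _ ha _ hb := le_of_fst_lt (ha.1 ▸ hb.1 ▸ hst)
  negL_eq t _ := image_negL_slice u t
  negR_eq t _ := image_negR_slice u t
  oplus_mem _ hs _ ht _ hx _ hy := oplus_mem_slice hs.1 ht.1 hx hy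

end Slice

theorem strongCyclicFamily_mk_zero [AddCommGroup H] [LinearOrder H] [AddGroup G] [Lattice G]
    (u : H) : StrongCyclicFamily u (mk u 0 : LexProd H G) (slice u) (fun h => mk h 0) :=
  ⟨fun t _ => ⟨mk_mem_slice u t, mk_zero_add_comm t⟩,
    fun _ _ _ _ _ => LexProd.ext rfl (add_zero 0), rfl⟩

end LexProd

end PseudoMV

open PseudoMV in
theorem stmt_5_general {H : Type*} [AddCommGroup H] [LinearOrder H] [IsOrderedAddMonoid H] {G : Type*} [Lattice G] [AddGroup G]
    [CovariantClass G G (· + ·) (· ≤ ·)]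
    (u : H) :
    IsDecomposition u (LexProd.mk u 0 : LexProd H G)
      (fun t => {p : LexProd H G | p.fst = t ∧ (t = 0 → 0 ≤ p.snd) ∧ (t = u → p.snd ≤ 0)}) ∧
    StrongCyclicFamily u (LexProd.mk u 0 : LexProd H G)
      (fun t => {p : LexProd H G | p.fst = t ∧ (t = 0 → 0 ≤ p.snd) ∧ (t = u → p.snd ≤ 0)})
      (fun h => LexProd.mk h 0) ∧
    IsStrongPerfect u (LexProd.mk u 0 : LexProd H G) :=
  ⟨LexProd.isDecomposition_slice u, LexProd.strongCyclicFamily_mk_zero u,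
    _, _, LexProd.isDecomposition_slice u, LexProd.strongCyclicFamily_mk_zero u⟩

open PseudoMV in
/-- Proposition 4.1: `Γ(H ×ₗ G, (u,0))` is a strong `(H,u)`-perfect pseudo MV-algebra,
with the canonical decomposition and the strong cyclic family `((h,0) : h ∈ [0,u]_H)`. -/
theorem stmt_5 {H : Type*} [AddCommGroup H] [LinearOrder H] [IsOrderedAddMonoid H] {G : Type*} [Lattice G] [AddGroup G]
    [CovariantClass G G (· + ·) (· ≤ ·)] [CovariantClass G G (Function.swap (· + ·)) (· ≤ ·)]
    (u : H) (hu : IsStrongUnit u) :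
    IsDecomposition u (LexProd.mk u 0 : LexProd H G)
      (fun t => {p : LexProd H G | p.fst = t ∧ (t = 0 → 0 ≤ p.snd) ∧ (t = u → p.snd ≤ 0)}) ∧
    StrongCyclicFamily u (LexProd.mk u 0 : LexProd H G)
      (fun t => {p : LexProd H G | p.fst = t ∧ (t = 0 → 0 ≤ p.snd) ∧ (t = u → p.snd ≤ 0)})
      (fun h => LexProd.mk h 0) ∧
    IsStrongPerfect u (LexProd.mk u 0 : LexProd H G) :=
  stmt_5_general u
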